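/- Suppose a nonzero vector w ∈ R^n satisfies ‖w‖₁ ≥ α√n·‖w‖₂ for α ∈ (0,1], and for a set K of cardinality k (1 ≤ k < n) one has C‖w_K‖₁ = ‖w_{K̄}‖₁ for some C ≥ 1. Then n/k + C²·n/(n-k) ≤ (C+1)²/α². -/

import Mathlib

open Finset
noncomputable section
open scoped Classical

def l1 {n : ℕ} (w : Fin n → ℝ) : ℝ := ∑ i, |w i|
def l2 {n : ℕ} (w : Fin n → ℝ) : ℝ := Real.sqrt (∑ i, (w i)^2)
def restr {n : ℕ} (w : Fin n → ℝ) (K : Finset (Fin n)) : Fin n → ℝ := fun i => if i ∈ K then w i else 0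
def l0 {n : ℕ} (w : Fin n → ℝ) : ℕ := (Finset.univ.filter (fun i => w i ≠ 0)).card

/-! Writing `a = ‖w_K‖₁`, the balance condition gives `‖w‖₁ = (C + 1) a` and `‖w_{K̄}‖₁ = C a`.
Cauchy–Schwarz on `K` and on `K̄` gives `‖w‖₂² ≥ a² / k + C² a² / (n - k)`, while the hypothesis
gives `α² n ‖w‖₂² ≤ ‖w‖₁² = (C + 1)² a²`; dividing by `α² a² > 0` yields the claim. -/

theorem sq_sum_abs_div_card_le {ι : Type*} (s : Finset ι) (f : ι → ℝ) :
    (∑ i ∈ s, |f i|) ^ 2 / #s ≤ ∑ i ∈ s, f i ^ 2 := by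
  refine div_le_of_le_mul₀ (Nat.cast_nonneg _) (sum_nonneg fun _ _ => sq_nonneg _) ?_
  simpa only [sq_abs, mul_comm] using sq_sum_le_card_mul_sum_sq (s := s) (f := fun i => |f i|)

section
variable {n : ℕ} (w : Fin n → ℝ)

theorem l1_nonneg : 0 ≤ l1 w := sum_nonneg fun _ _ => abs_nonneg _

theorem l1_pos (hw : w ≠ 0) : 0 < l1 w := by
  obtain ⟨i, hi⟩ := Function.ne_iff.mp hw
  exact sum_pos' (fun _ _ => abs_nonneg _) ⟨i, mem_univ i, abs_pos.mpr hi⟩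

theorem sq_l2 : l2 w ^ 2 = ∑ i, w i ^ 2 :=
  Real.sq_sqrt (sum_nonneg fun _ _ => sq_nonneg _)

theorem l1_restr (s : Finset (Fin n)) : l1 (restr w s) = ∑ i ∈ s, |w i| := by
  simp only [l1, restr, apply_ite abs, abs_zero]
  rw [sum_ite_mem, univ_inter]

theorem l1_eq_l1_restr_add_l1_restr_compl (K : Finset (Fin n)) :
    l1 w = l1 (restr w K) + l1 (restr w Kᶜ) := by
  rw [l1_restr, l1_restr, l1, sum_add_sum_compl]

theorem sq_l1_restr_div_card_add_le_sq_l2 (K : Finset (Fin n)) :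
    l1 (restr w K) ^ 2 / #K + l1 (restr w Kᶜ) ^ 2 / #Kᶜ ≤ l2 w ^ 2 := by
  rw [l1_restr, l1_restr, sq_l2, ← sum_add_sum_compl K]
  exact add_le_add (sq_sum_abs_div_card_le K w) (sq_sum_abs_div_card_le Kᶜ w)

theorem mul_sq_l2_le_sq_l1_of_le {α : ℝ} (hα : 0 ≤ α) (h : α * Real.sqrt n * l2 w ≤ l1 w) :
    α ^ 2 * n * l2 w ^ 2 ≤ l1 w ^ 2 :=
  calc α ^ 2 * n * l2 w ^ 2 = (α * Real.sqrt n * l2 w) ^ 2 := by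
        rw [mul_pow, mul_pow, Real.sq_sqrt (Nat.cast_nonneg n)]
    _ ≤ l1 w ^ 2 := pow_le_pow_left₀ (by unfold l2; positivity) h 2

end

theorem stmt2_general {n : ℕ} (w : Fin n → ℝ) (K : Finset (Fin n)) (k : ℕ) (α C : ℝ)
    (hw : w ≠ 0)
    (hα0 : 0 < α)
    (hAE : l1 w ≥ α * Real.sqrt n * l2 w)
    (hK : K.card = k)
    (hbal : C * l1 (restr w K) = l1 (restr w Kᶜ)) :
    (n : ℝ) / k + C ^ 2 * n / (n - k : ℝ) ≤ (C + 1) ^ 2 / α ^ 2 := by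
  set a := l1 (restr w K)
  have hsplit : l1 w = (C + 1) * a := by
    rw [l1_eq_l1_restr_add_l1_restr_compl w K, ← hbal]; ring
  have ha : a ≠ 0 := fun h => (l1_pos w hw).ne' (by rw [hsplit, h, mul_zero])
  have hkn : k ≤ n := hK ▸ (card_le_univ K).trans_eq (Fintype.card_fin n)
  have hcard : (#Kᶜ : ℝ) = n - k := by
    rw [card_compl, Fintype.card_fin, hK, Nat.cast_sub hkn]
  have hCS := sq_l1_restr_div_card_add_le_sq_l2 w K
  rw [← hbal, hK, hcard] at hCS
  rw [le_div_iff₀ (by positivity)]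
  refine le_of_mul_le_mul_right ?_ (by positivity : 0 < a ^ 2)
  calc (n / k + C ^ 2 * n / (n - k)) * α ^ 2 * a ^ 2
      = α ^ 2 * n * (a ^ 2 / k + (C * a) ^ 2 / (n - k)) := by ring
    _ ≤ α ^ 2 * n * l2 w ^ 2 := by gcongr
    _ ≤ l1 w ^ 2 := mul_sq_l2_le_sq_l1_of_le w hα0.le hAE
    _ = (C + 1) ^ 2 * a ^ 2 := by rw [hsplit, mul_pow]

theorem stmt2 {n : ℕ} (w : Fin n → ℝ) (K : Finset (Fin n)) (k : ℕ) (α C : ℝ)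
    (hw : w ≠ 0)
    (hα0 : 0 < α) (hα1 : α ≤ 1)
    (hAE : l1 w ≥ α * Real.sqrt n * l2 w)
    (hK : K.card = k) (hk1 : 1 ≤ k) (hkn : k < n)
    (hC : 1 ≤ C)
    (hbal : C * l1 (restr w K) = l1 (restr w Kᶜ)) :
    (n : ℝ) / k + C ^ 2 * n / (n - k : ℝ) ≤ (C + 1) ^ 2 / α ^ 2 :=
  stmt2_general w K k α C hw hα0 hAE hK hbal
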